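/- arXiv:math/0603550 — 2 statements merged into one kernel-verified Lean document; each statement's English description precedes it below -/
import Mathlib

section
/- Let p > 4 and s ∈ ℝ. Then sup_{t>0} (1+t)·log²(2+t) · ∫₀ᵗ [log²(2+τ) / ((1+|t−τ|)·log²(2+|t−τ|))] · (1+τ)^{−(2−4/p)} dτ < ∞. -/
set_option maxHeartbeats 1000000

open Real MeasureTheory

/-- Convolution estimate: for `p > 4`, the kernel `1/((1+t)log²(2+t))` convolved with
`log²(2+τ)(1+τ)^{-(2-4/p)}` decays like the kernel. -/
theorem stmt_0 (p : ℝ) (hp : 4 < p) (s : ℝ) :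
    ∃ C : ℝ, ∀ t : ℝ, 0 < t →
      (1 + t) * (Real.log (2 + t))^2 *
        ∫ τ in (0:ℝ)..t,
          ((Real.log (2 + τ))^2 / ((1 + |t - τ|) * (Real.log (2 + |t - τ|))^2)) *
            (1 + τ) ^ (-(2 - 4/p)) ≤ C := by
  have hp0 : (0:ℝ) < p := by linarith
  obtain ⟨a, ha_def⟩ : ∃ x : ℝ, x = 2 - 4/p := ⟨_, rfl⟩
  rw [show (2 - 4/p) = a from ha_def.symm]
  have ha1 : 1 < a := by
    have h1 : 4/p < 1 := (div_lt_one hp0).mpr hp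
    rw [ha_def]; linarith
  have hl2 : (0:ℝ) < Real.log 2 := Real.log_pos (by norm_num)
  obtain ⟨δ, hδ_def⟩ : ∃ x : ℝ, x = (a-1)/4 := ⟨_, rfl⟩
  obtain ⟨ε, hε_def⟩ : ∃ x : ℝ, x = (a-1)/5 := ⟨_, rfl⟩
  have hδ : 0 < δ := by rw [hδ_def]; linarith
  have hε : 0 < ε := by rw [hε_def]; linarith
  -- growth lemma for the logarithm
  have hlog : ∀ e : ℝ, 0 < e → ∀ x : ℝ, 0 ≤ x →
      Real.log (2+x) ≤ 2^e/e * (1+x)^e := by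
    intro e he x hx
    have h1 : Real.log (2+x) ≤ (2+x)^e / e := Real.log_le_rpow_div (by linarith) he
    have h2 : ((2:ℝ)+x)^e ≤ ((2:ℝ)*(1+x))^e := Real.rpow_le_rpow (by linarith) (by linarith) he.le
    have h3 : ((2:ℝ)*(1+x))^e = 2^e * (1+x)^e := Real.mul_rpow (by norm_num) (by linarith)
    calc Real.log (2+x) ≤ (2+x)^e/e := h1
      _ ≤ (2*(1+x))^e/e := by gcongr
      _ = 2^e/e * (1+x)^e := by rw [h3]; ring
  have hlog2 : ∀ e : ℝ, 0 < e → ∀ x : ℝ, 0 ≤ x →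
      (Real.log (2+x))^2 ≤ (2^e/e)^2 * (1+x)^(2*e) := by
    intro e he x hx
    have h0 : 0 ≤ Real.log (2+x) := Real.log_nonneg (by linarith)
    have h4 : ((1+x)^e)^(2:ℕ) = (1+x)^(2*e) := by
      rw [← Real.rpow_natCast ((1+x)^e) 2, ← Real.rpow_mul (by linarith : (0:ℝ) ≤ 1+x)]
      congr 1; push_cast; ring
    calc (Real.log (2+x))^2 ≤ (2^e/e * (1+x)^e)^2 :=
          pow_le_pow_left₀ h0 (hlog e he x hx) 2
      _ = (2^e/e)^2 * ((1+x)^e)^(2:ℕ) := by ring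
      _ = (2^e/e)^2 * (1+x)^(2*e) := by rw [h4]
  refine ⟨8 * ((2:ℝ)^δ/δ)^2 / (2*δ) + 2^a * ((2:ℝ)^ε/ε)^5 / (Real.log 2)^2, ?_⟩
  intro t ht
  obtain ⟨L, hL_def⟩ : ∃ x : ℝ, x = Real.log (2+t) := ⟨_, rfl⟩
  obtain ⟨Lh, hLh_def⟩ : ∃ x : ℝ, x = Real.log (2+t/2) := ⟨_, rfl⟩
  rw [show Real.log (2+t) = L from hL_def.symm]
  have hL0 : 0 ≤ L := by rw [hL_def]; exact Real.log_nonneg (by linarith)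
  have hLh0 : 0 < Lh := by rw [hLh_def]; exact Real.log_pos (by linarith)
  have hLLh : L ≤ 2*Lh := by
    have h1 : (2:ℝ)+t ≤ (2+t/2)^2 := by nlinarith
    have h2 : Real.log ((2+t/2)^2) = 2 * Real.log (2+t/2) := by
      rw [Real.log_pow]; push_cast; ring
    rw [hL_def, hLh_def]
    calc Real.log (2+t) ≤ Real.log ((2+t/2)^2) := Real.log_le_log (by linarith) h1
      _ = 2*Real.log (2+t/2) := h2
  obtain ⟨F, hF_def⟩ : ∃ G : ℝ → ℝ, G = fun τ =>
      ((Real.log (2 + τ))^2 / ((1 + |t - τ|) * (Real.log (2 + |t - τ|))^2)) *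
        (1 + τ) ^ (-a) := ⟨_, rfl⟩
  rw [show (fun τ => ((Real.log (2 + τ))^2 / ((1 + |t - τ|) * (Real.log (2 + |t - τ|))^2)) *
        (1 + τ) ^ (-a)) = F from hF_def.symm]
  -- continuity / integrability
  have hFcont : ContinuousOn F (Set.Icc 0 t) := by
    rw [hF_def]
    apply ContinuousOn.mul
    · apply ContinuousOn.div
      · apply ContinuousOn.pow
        apply ContinuousOn.log (by fun_prop)
        intro x hx
        have := hx.1
        intro h; simp only [Set.mem_Icc] at *; linarith
      · apply Continuous.continuousOn
        have hc : Continuous fun τ : ℝ => Real.log (2+|t-τ|) := by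
          apply Continuous.log (by fun_prop)
          intro x; positivity
        fun_prop
      · intro x _
        have h1 : (0:ℝ) < 1 + |t - x| := by positivity
        have h2 : Real.log 2 ≤ Real.log (2 + |t-x|) :=
          Real.log_le_log (by norm_num) (by simp [abs_nonneg])
        have h3 : (0:ℝ) < Real.log (2 + |t-x|) := lt_of_lt_of_le hl2 h2
        positivity
    · apply ContinuousOn.rpow_const (by fun_prop)
      intro x hx
      have := hx.1
      exact Or.inl (by intro h; linarith [h ▸ this])
  have hint1 : IntervalIntegrable F volume 0 (t/2) := by
    apply ContinuousOn.intervalIntegrable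
    rw [Set.uIcc_of_le (by linarith)]
    exact hFcont.mono (Set.Icc_subset_Icc le_rfl (by linarith))
  have hint2 : IntervalIntegrable F volume (t/2) t := by
    apply ContinuousOn.intervalIntegrable
    rw [Set.uIcc_of_le (by linarith)]
    exact hFcont.mono (Set.Icc_subset_Icc (by linarith) le_rfl)
  have hsplit := intervalIntegral.integral_add_adjacent_intervals hint1 hint2
  -- first piece
  have hQ : (0:ℝ) ≤ ((2:ℝ)^δ/δ)^2 := sq_nonneg _
  have hP : (0:ℝ) < (1+t/2) * Lh^2 := mul_pos (by linarith) (pow_pos hLh0 2)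
  have hptw1 : ∀ τ ∈ Set.Icc (0:ℝ) (t/2),
      F τ ≤ ((2:ℝ)^δ/δ)^2 / ((1+t/2) * Lh^2) * (1+τ)^(2*δ - a) := by
    intro τ hτ
    obtain ⟨hτ0, hτt⟩ := hτ
    have habs : |t - τ| = t - τ := abs_of_nonneg (by linarith)
    have hD : (1+t/2) * Lh^2 ≤ (1 + |t-τ|) * (Real.log (2+|t-τ|))^2 := by
      rw [habs]
      have h1 : 1 + t/2 ≤ 1 + (t - τ) := by linarith
      have h2 : Lh ≤ Real.log (2 + (t-τ)) := by
        rw [hLh_def]; exact Real.log_le_log (by linarith) (by linarith)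
      have h2' : Lh^2 ≤ (Real.log (2+(t-τ)))^2 := pow_le_pow_left₀ hLh0.le h2 2
      exact mul_le_mul h1 h2' (sq_nonneg _) (by linarith)
    have hN := hlog2 δ hδ τ hτ0
    have hR0 : (0:ℝ) ≤ (1+τ)^(-a) := Real.rpow_nonneg (by linarith) _
    have step : F τ ≤ (((2:ℝ)^δ/δ)^2 * (1+τ)^(2*δ)) / ((1+t/2)*Lh^2) * (1+τ)^(-a) := by
      simp only [hF_def]
      apply mul_le_mul_of_nonneg_right _ hR0
      apply div_le_div₀ (mul_nonneg hQ (Real.rpow_nonneg (by linarith) _)) hN hP hD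
    calc F τ ≤ (((2:ℝ)^δ/δ)^2 * (1+τ)^(2*δ)) / ((1+t/2)*Lh^2) * (1+τ)^(-a) := step
      _ = ((2:ℝ)^δ/δ)^2 / ((1+t/2)*Lh^2) * ((1+τ)^(2*δ) * (1+τ)^(-a)) := by ring
      _ = ((2:ℝ)^δ/δ)^2 / ((1+t/2)*Lh^2) * (1+τ)^(2*δ - a) := by
          rw [← Real.rpow_add (by linarith : (0:ℝ) < 1+τ)]
          ring_nf
  have hbd1cont : IntervalIntegrable
      (fun τ : ℝ => ((2:ℝ)^δ/δ)^2 / ((1+t/2) * Lh^2) * (1+τ)^(2*δ - a)) volume 0 (t/2) := by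
    apply IntervalIntegrable.const_mul
    apply ContinuousOn.intervalIntegrable
    apply ContinuousOn.rpow_const (by fun_prop)
    intro x hx
    rw [Set.uIcc_of_le (by linarith)] at hx
    have := hx.1
    exact Or.inl (by intro h; linarith [h ▸ this])
  have hJ : ∫ τ in (0:ℝ)..(t/2), (1+τ)^(2*δ-a) ≤ 1/(2*δ) := by
    have h1 : ∫ τ in (0:ℝ)..(t/2), (1+τ)^(2*δ-a)
        = ∫ u in (1:ℝ)..(1+t/2), u^(2*δ-a) := by
      have := intervalIntegral.integral_comp_add_left (a := 0) (b := t/2)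
        (fun u : ℝ => u^(2*δ-a)) 1
      simpa using this
    have hne : 2*δ - a ≠ -1 := by rw [hδ_def]; intro h; linarith
    have hmem : (0:ℝ) ∉ Set.uIcc (1:ℝ) (1+t/2) := by
      rw [Set.uIcc_of_le (by linarith)]
      intro h; linarith [h.1]
    rw [h1, integral_rpow (Or.inr ⟨hne, hmem⟩)]
    have hexp : 2*δ - a + 1 = -(2*δ) := by rw [hδ_def]; ring
    rw [hexp, Real.one_rpow]
    have hX : (0:ℝ) ≤ (1+t/2)^(-(2*δ)) := Real.rpow_nonneg (by linarith) _
    rw [show ((1+t/2)^(-(2*δ)) - 1)/(-(2*δ)) = (1 - (1+t/2)^(-(2*δ)))/(2*δ) from by ring]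
    exact (div_le_div_iff_of_pos_right (by linarith : (0:ℝ) < 2*δ)).mpr (by linarith)
  have hI1 : ∫ τ in (0:ℝ)..(t/2), F τ ≤
      ((2:ℝ)^δ/δ)^2 / ((1+t/2) * Lh^2) * (1/(2*δ)) := by
    calc ∫ τ in (0:ℝ)..(t/2), F τ
        ≤ ∫ τ in (0:ℝ)..(t/2), ((2:ℝ)^δ/δ)^2 / ((1+t/2) * Lh^2) * (1+τ)^(2*δ-a) :=
          intervalIntegral.integral_mono_on (by linarith) hint1 hbd1cont hptw1
      _ = ((2:ℝ)^δ/δ)^2 / ((1+t/2) * Lh^2) * ∫ τ in (0:ℝ)..(t/2), (1+τ)^(2*δ-a) :=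
          intervalIntegral.integral_const_mul _ _
      _ ≤ ((2:ℝ)^δ/δ)^2 / ((1+t/2) * Lh^2) * (1/(2*δ)) :=
          mul_le_mul_of_nonneg_left hJ (div_nonneg hQ hP.le)
  -- second piece
  have hptw2 : ∀ τ ∈ Set.Icc (t/2) t,
      F τ ≤ (L^2 * (1+t/2)^(-a) / (Real.log 2)^2) * (1+(t-τ))⁻¹ := by
    intro τ hτ
    obtain ⟨hτ0, hτt⟩ := hτ
    have habs : |t - τ| = t - τ := abs_of_nonneg (by linarith)
    have hN : (Real.log (2+τ))^2 ≤ L^2 := by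
      apply pow_le_pow_left₀ (Real.log_nonneg (by linarith))
      rw [hL_def]; exact Real.log_le_log (by linarith) (by linarith)
    have hR : (1+τ)^(-a) ≤ (1+t/2)^(-a) :=
      Real.rpow_le_rpow_of_nonpos (by linarith) (by linarith) (by linarith)
    have hD : (1+(t-τ)) * (Real.log 2)^2 ≤ (1 + |t-τ|) * (Real.log (2+|t-τ|))^2 := by
      rw [habs]
      have h2 : Real.log 2 ≤ Real.log (2 + (t-τ)) :=
        Real.log_le_log (by norm_num) (by linarith)
      exact mul_le_mul le_rfl (pow_le_pow_left₀ hl2.le h2 2) (sq_nonneg _) (by linarith)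
    have hDpos : (0:ℝ) < (1+(t-τ)) * (Real.log 2)^2 :=
      mul_pos (by linarith) (pow_pos hl2 2)
    have hne1 : (1:ℝ)+(t-τ) ≠ 0 := by intro h; nlinarith [h]
    have step : F τ ≤ L^2 / ((1+(t-τ)) * (Real.log 2)^2) * (1+t/2)^(-a) := by
      simp only [hF_def]
      exact mul_le_mul (div_le_div₀ (sq_nonneg L) hN hDpos hD) hR
        (Real.rpow_nonneg (by linarith) _) (div_nonneg (sq_nonneg L) hDpos.le)
    calc F τ ≤ L^2 / ((1+(t-τ)) * (Real.log 2)^2) * (1+t/2)^(-a) := step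
      _ = (L^2 * (1+t/2)^(-a) / (Real.log 2)^2) * (1+(t-τ))⁻¹ := by
          rw [div_eq_mul_inv, div_eq_mul_inv, mul_inv]
          ring
  have hbd2cont : IntervalIntegrable
      (fun τ : ℝ => (L^2 * (1+t/2)^(-a) / (Real.log 2)^2) * (1+(t-τ))⁻¹) volume (t/2) t := by
    apply IntervalIntegrable.const_mul
    apply ContinuousOn.intervalIntegrable
    apply ContinuousOn.inv₀ (by fun_prop)
    intro x hx
    rw [Set.uIcc_of_le (by linarith)] at hx
    have := hx.2
    intro h; linarith
  have hinv : ∫ τ in (t/2)..t, (1+(t-τ))⁻¹ = Real.log (1+t/2) := by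
    have h1 : (∫ τ in (t/2)..t, (fun u : ℝ => (1+u)⁻¹) (t - τ))
        = ∫ u in (t-t)..(t-t/2), (1+u)⁻¹ :=
      intervalIntegral.integral_comp_sub_left (a := t/2) (b := t) (fun u : ℝ => (1+u)⁻¹) t
    simp only [sub_self] at h1
    have h2 : (∫ u in (0:ℝ)..(t-t/2), (1+u)⁻¹) = ∫ v in (1:ℝ)..(1+(t-t/2)), v⁻¹ := by
      have := intervalIntegral.integral_comp_add_left (a := 0) (b := t-t/2)
        (fun v : ℝ => v⁻¹) 1
      simpa using this
    have h3 : (0:ℝ) ∉ Set.uIcc (1:ℝ) (1+(t-t/2)) := by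
      rw [Set.uIcc_of_le (by linarith)]
      intro h; linarith [h.1]
    calc ∫ τ in (t/2)..t, (1+(t-τ))⁻¹ = ∫ u in (0:ℝ)..(t-t/2), (1+u)⁻¹ := h1
      _ = ∫ v in (1:ℝ)..(1+(t-t/2)), v⁻¹ := h2
      _ = Real.log ((1+(t-t/2))/1) := integral_inv h3
      _ = Real.log (1+t/2) := by rw [div_one]; congr 1; ring
  have hM2 : (0:ℝ) ≤ L^2 * (1+t/2)^(-a) / (Real.log 2)^2 :=
    div_nonneg (mul_nonneg (sq_nonneg _) (Real.rpow_nonneg (by linarith) _)) (sq_nonneg _)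
  have hI2 : ∫ τ in (t/2)..t, F τ ≤ (L^2 * (1+t/2)^(-a) / (Real.log 2)^2) * L := by
    calc ∫ τ in (t/2)..t, F τ
        ≤ ∫ τ in (t/2)..t, (L^2 * (1+t/2)^(-a) / (Real.log 2)^2) * (1+(t-τ))⁻¹ :=
          intervalIntegral.integral_mono_on (by linarith) hint2 hbd2cont hptw2
      _ = (L^2 * (1+t/2)^(-a) / (Real.log 2)^2) * ∫ τ in (t/2)..t, (1+(t-τ))⁻¹ :=
          intervalIntegral.integral_const_mul _ _
      _ = (L^2 * (1+t/2)^(-a) / (Real.log 2)^2) * Real.log (1+t/2) := by rw [hinv]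
      _ ≤ (L^2 * (1+t/2)^(-a) / (Real.log 2)^2) * L := by
          apply mul_le_mul_of_nonneg_left _ hM2
          rw [hL_def]
          exact Real.log_le_log (by linarith) (by linarith)
  -- assemble
  have h0 : (0:ℝ) ≤ (1+t)*L^2 := mul_nonneg (by linarith) (sq_nonneg L)
  have hterm1 : (1+t)*L^2 * (((2:ℝ)^δ/δ)^2 / ((1+t/2) * Lh^2) * (1/(2*δ)))
      ≤ 8 * ((2:ℝ)^δ/δ)^2 / (2*δ) := by
    have hLsq : L^2 ≤ 4*Lh^2 := by nlinarith
    have hPL : (1+t)*L^2 ≤ 8*((1+t/2)*Lh^2) := by nlinarith [sq_nonneg Lh, sq_nonneg L]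
    have key : (1+t)*L^2 * (((2:ℝ)^δ/δ)^2 / ((1+t/2) * Lh^2) * (1/(2*δ)))
        = ((1+t)*L^2) * ((2:ℝ)^δ/δ)^2 / (((1+t/2)*Lh^2) * (2*δ)) := by
      rw [div_mul_div_comm, mul_one, ← mul_div_assoc]
    rw [key, div_le_div_iff₀ (mul_pos hP (by linarith)) (by linarith : (0:ℝ) < 2*δ)]
    nlinarith [mul_le_mul_of_nonneg_right hPL (mul_nonneg hQ (by linarith : (0:ℝ) ≤ 2*δ))]
  have hterm2 : (1+t)*L^2 * ((L^2 * (1+t/2)^(-a) / (Real.log 2)^2) * L)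
      ≤ 2^a * ((2:ℝ)^ε/ε)^5 / (Real.log 2)^2 := by
    have h1 : (1+t/2)^(-a) ≤ 2^a * (1+t)^(-a) := by
      have h2 : (1+t/2)^(-a) ≤ ((1+t)/2)^(-a) :=
        Real.rpow_le_rpow_of_nonpos (by linarith) (by linarith) (by linarith)
      have h3 : ((1+t)/2)^(-a) = 2^a * (1+t)^(-a) := by
        rw [Real.div_rpow (by linarith) (by norm_num),
          Real.rpow_neg (by norm_num : (0:ℝ) ≤ 2) a, div_eq_mul_inv, inv_inv]
        ring
      rw [h3] at h2
      exact h2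
    have hcast : ((1+t)^ε)^(5:ℕ) = (1+t)^(a-1) := by
      rw [← Real.rpow_natCast ((1+t)^ε) 5, ← Real.rpow_mul (by linarith : (0:ℝ) ≤ 1+t)]
      congr 1
      rw [hε_def]; push_cast; ring
    have h5 : L^5 ≤ ((2:ℝ)^ε/ε)^5 * (1+t)^(a-1) := by
      have hl := hlog ε hε t ht.le
      have hl' : L ≤ 2^ε/ε * (1+t)^ε := by rw [hL_def]; exact hl
      calc L^5 ≤ ((2:ℝ)^ε/ε * (1+t)^ε)^5 := pow_le_pow_left₀ hL0 hl' 5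
        _ = ((2:ℝ)^ε/ε)^5 * ((1+t)^ε)^(5:ℕ) := by ring
        _ = ((2:ℝ)^ε/ε)^5 * (1+t)^(a-1) := by rw [hcast]
    have hone : (1+t) * ((1+t)^(a-1) * (1+t)^(-a)) = 1 := by
      rw [← Real.rpow_add (by linarith : (0:ℝ) < 1+t)]
      rw [show a - 1 + -a = -1 from by ring, Real.rpow_neg_one]
      exact mul_inv_cancel₀ (by linarith)
    have hCe : (0:ℝ) ≤ ((2:ℝ)^ε/ε)^5 := by positivity
    have main : (1+t) * L^5 * (1+t/2)^(-a)
        ≤ (1+t) * (((2:ℝ)^ε/ε)^5 * (1+t)^(a-1)) * (2^a * (1+t)^(-a)) := by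
      apply mul_le_mul
      · exact mul_le_mul_of_nonneg_left h5 (by linarith)
      · exact h1
      · exact Real.rpow_nonneg (by linarith) _
      · exact mul_nonneg (by linarith)
          (mul_nonneg hCe (Real.rpow_nonneg (by linarith) _))
    calc (1+t)*L^2 * ((L^2 * (1+t/2)^(-a) / (Real.log 2)^2) * L)
        = ((1+t) * L^5 * (1+t/2)^(-a)) / (Real.log 2)^2 := by ring
      _ ≤ ((1+t) * (((2:ℝ)^ε/ε)^5 * (1+t)^(a-1)) * (2^a * (1+t)^(-a))) / (Real.log 2)^2 :=
          (div_le_div_iff_of_pos_right (pow_pos hl2 2)).mpr main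
      _ = (2^a * ((2:ℝ)^ε/ε)^5 / (Real.log 2)^2) * ((1+t) * ((1+t)^(a-1) * (1+t)^(-a))) := by
          ring
      _ = 2^a * ((2:ℝ)^ε/ε)^5 / (Real.log 2)^2 := by rw [hone, mul_one]
  calc (1 + t) * L^2 * ∫ τ in (0:ℝ)..t, F τ
      = (1+t)*L^2 * ((∫ τ in (0:ℝ)..(t/2), F τ) + ∫ τ in (t/2)..t, F τ) := by
        rw [hsplit]
    _ = (1+t)*L^2 * (∫ τ in (0:ℝ)..(t/2), F τ) + (1+t)*L^2 * ∫ τ in (t/2)..t, F τ := by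
        ring
    _ ≤ (1+t)*L^2 * (((2:ℝ)^δ/δ)^2 / ((1+t/2) * Lh^2) * (1/(2*δ)))
        + (1+t)*L^2 * ((L^2 * (1+t/2)^(-a) / (Real.log 2)^2) * L) :=
        add_le_add (mul_le_mul_of_nonneg_left hI1 h0) (mul_le_mul_of_nonneg_left hI2 h0)
    _ ≤ 8 * ((2:ℝ)^δ/δ)^2 / (2*δ) + 2^a * ((2:ℝ)^ε/ε)^5 / (Real.log 2)^2 :=
        add_le_add hterm1 hterm2
end

section
/- Let p > 3. Then sup_{t>0} (1+t)·log²(2+t) · ∫₀ᵗ [log²(2+τ) / ((1+|t−τ|)·log²(2+|t−τ|)·(1+τ)^{3−6/p})] dτ < ∞. -/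
/-!
Split the integral at `τ = t/2`. On `[0, t/2]` the kernel `k(s) = 1/((1+s) log²(2+s))` is
evaluated at `t - τ ≥ t/2`, where it is at most `8 k(t)`, and the weight
`log²(2+τ)(1+τ)^{-a}`, `a = 3 - 6/p > 1`, has integral bounded uniformly in `t` because it is
dominated by `(1+τ)^{-(a+1)/2}`. On `[t/2, t]` the weight is at most `2^a log²(2+t)(1+t)^{-a}`,
and the kernel integrates to at most `2 / log 2` thanks to the antiderivative `-1/log(2+s)`;
multiplied by `(1+t) log²(2+t)` this gives `O(log⁴(2+t) (1+t)^{1-a}) = O(1)`.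
-/

open Real Set

lemma exists_log_two_add_pow_le (n : ℕ) {r : ℝ} (hr : 0 < r) :
    ∃ C, ∀ x : ℝ, 0 ≤ x → log (2 + x) ^ n ≤ C * (1 + x) ^ r := by
  rcases n.eq_zero_or_pos with rfl | hn
  · exact ⟨1, fun x hx => by simpa using one_le_rpow (by linarith) hr.le⟩
  set ε := r / n
  have hε : 0 < ε := by positivity
  refine ⟨(2 ^ ε / ε) ^ n, fun x hx => ?_⟩
  have hlog : log (2 + x) ≤ 2 ^ ε / ε * (1 + x) ^ ε := calc
    log (2 + x) ≤ (2 + x) ^ ε / ε := log_le_rpow_div (by linarith) hε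
    _ ≤ (2 * (1 + x)) ^ ε / ε := by gcongr; linarith
    _ = 2 ^ ε / ε * (1 + x) ^ ε := by rw [mul_rpow (by norm_num) (by linarith)]; ring
  calc log (2 + x) ^ n ≤ (2 ^ ε / ε * (1 + x) ^ ε) ^ n := by
        gcongr; exact log_nonneg (by linarith)
    _ = (2 ^ ε / ε) ^ n * (1 + x) ^ r := by
        rw [mul_pow, ← rpow_mul_natCast (by linarith), div_mul_cancel₀ _ (by positivity)]

lemma integral_one_add_rpow_neg_le {b T : ℝ} (hb : 1 < b) (hT : 0 ≤ T) :
    ∫ τ in (0:ℝ)..T, (1 + τ) ^ (-b) ≤ 1 / (b - 1) := by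
  have hshift : ∫ τ in (0:ℝ)..T, (1 + τ) ^ (-b) = ∫ x in (1:ℝ)..1 + T, x ^ (-b) := by
    simpa using intervalIntegral.integral_comp_add_left (fun x => x ^ (-b)) (1:ℝ) (a := 0) (b := T)
  have h0 : (0:ℝ) ∉ uIcc 1 (1 + T) := by
    rw [uIcc_of_le (by linarith)]; exact fun h => by linarith [h.1]
  rw [hshift, integral_rpow (Or.inr ⟨by linarith, h0⟩), one_rpow,
    show -b + 1 = -(b - 1) by ring, div_neg, ← neg_div, neg_sub]
  gcongr
  linarith [rpow_nonneg (show (0:ℝ) ≤ 1 + T by linarith) (-(b - 1))]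

theorem integral_comp_sub_mul_le {k f : ℝ → ℝ} {t D K M F : ℝ} (ht : 0 ≤ t)
    (hk : Continuous k) (hf : ContinuousOn f (Icc 0 t))
    (hk0 : ∀ s ∈ Icc 0 t, 0 ≤ k s) (hf0 : ∀ τ ∈ Icc 0 t, 0 ≤ f τ)
    (hk_far : ∀ s ∈ Icc (t / 2) t, k s ≤ D * k t) (hf_near : ∀ τ ∈ Icc (t / 2) t, f τ ≤ F)
    (hK : ∫ s in (0:ℝ)..t / 2, k s ≤ K) (hM : ∫ τ in (0:ℝ)..t / 2, f τ ≤ M) :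
    ∫ τ in (0:ℝ)..t, k (t - τ) * f τ ≤ D * k t * M + F * K := by
  have hhalf : t / 2 ∈ Icc 0 t := ⟨by linarith, by linarith⟩
  have hhalf' : t / 2 ∈ Icc (t / 2) t := ⟨le_rfl, by linarith⟩
  have hDk : 0 ≤ D * k t := (hk0 _ hhalf).trans (hk_far _ hhalf')
  have hF : 0 ≤ F := (hf0 _ hhalf).trans (hf_near _ hhalf')
  have hkf : ContinuousOn (fun τ => k (t - τ) * f τ) (Icc 0 t) :=
    (hk.comp (continuous_const.sub continuous_id)).continuousOn.mul hf
  have hsub₁ : Icc 0 (t / 2) ⊆ Icc 0 t := Icc_subset_Icc le_rfl (by linarith)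
  have hsub₂ : Icc (t / 2) t ⊆ Icc 0 t := Icc_subset_Icc (by linarith) le_rfl
  have h_near : ∫ τ in (0:ℝ)..t / 2, k (t - τ) * f τ ≤ D * k t * M := calc
    _ ≤ ∫ τ in (0:ℝ)..t / 2, D * k t * f τ := by
        refine intervalIntegral.integral_mono_on (by linarith)
          ((hkf.mono hsub₁).intervalIntegrable_of_Icc (by linarith))
          (((hf.mono hsub₁).const_smul (D * k t)).intervalIntegrable_of_Icc (by linarith))
          fun τ hτ => ?_
        exact mul_le_mul_of_nonneg_right (hk_far _ ⟨by linarith [hτ.2], by linarith [hτ.1]⟩)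
          (hf0 _ (hsub₁ hτ))
    _ ≤ D * k t * M := by
        rw [intervalIntegral.integral_const_mul]
        exact mul_le_mul_of_nonneg_left hM hDk
  have h_far : ∫ τ in t / 2..t, k (t - τ) * f τ ≤ F * K := calc
    _ ≤ ∫ τ in t / 2..t, k (t - τ) * F := by
        refine intervalIntegral.integral_mono_on (by linarith)
          ((hkf.mono hsub₂).intervalIntegrable_of_Icc (by linarith))
          (((hk.comp (continuous_const.sub continuous_id)).mul continuous_const).intervalIntegrable _ _)
          fun τ hτ => ?_
        exact mul_le_mul_of_nonneg_left (hf_near τ hτ)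
          (hk0 _ ⟨by linarith [hτ.2], by linarith [hτ.1]⟩)
    _ = F * ∫ s in (0:ℝ)..t / 2, k s := by
        rw [intervalIntegral.integral_mul_const, intervalIntegral.integral_comp_sub_left,
          sub_self, show t - t / 2 = t / 2 by ring, mul_comm]
    _ ≤ F * K := mul_le_mul_of_nonneg_left hK hF
  rw [← intervalIntegral.integral_add_adjacent_intervals
    ((hkf.mono hsub₁).intervalIntegrable_of_Icc (by linarith))
    ((hkf.mono hsub₂).intervalIntegrable_of_Icc (by linarith))]
  exact add_le_add h_near h_far

noncomputable def logKernel (s : ℝ) : ℝ := ((1 + |s|) * log (2 + |s|) ^ 2)⁻¹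

lemma log_two_add_abs_pos (s : ℝ) : 0 < log (2 + |s|) :=
  log_pos (by linarith [abs_nonneg s])

lemma logKernel_pos (s : ℝ) : 0 < logKernel s := by
  have := log_two_add_abs_pos s
  unfold logKernel
  positivity

lemma continuous_logKernel : Continuous logKernel := by
  have hlog : Continuous fun s : ℝ => log (2 + |s|) :=
    (continuous_const.add continuous_abs : Continuous fun s : ℝ => 2 + |s|).log
      fun s => (by positivity : (2:ℝ) + |s| ≠ 0)
  exact ((continuous_const.add continuous_abs).mul (hlog.pow 2)).inv₀
    fun s => (inv_pos.mp (logKernel_pos s)).ne'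

lemma logKernel_le_of_half_le {s t : ℝ} (ht : 0 ≤ t) (hs : t / 2 ≤ s) :
    logKernel s ≤ 8 * logKernel t := by
  have hs0 : 0 ≤ s := by linarith
  have hlog : log (2 + t) ≤ 2 * log (2 + s) := by
    calc log (2 + t) ≤ log ((2 + s) ^ 2) := log_le_log (by linarith) (by nlinarith)
      _ = 2 * log (2 + s) := by rw [log_pow]; norm_num
  have hlogt : 0 < log (2 + t) := log_pos (by linarith)
  unfold logKernel
  rw [abs_of_nonneg hs0, abs_of_nonneg ht, ← div_eq_mul_inv, ← inv_div]
  gcongr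
  calc (1 + t) * log (2 + t) ^ 2 / 8 ≤ (2 * (1 + s)) * (2 * log (2 + s)) ^ 2 / 8 := by
        gcongr; linarith
    _ = (1 + s) * log (2 + s) ^ 2 := by ring

lemma hasDerivAt_neg_inv_log_two_add {s : ℝ} (hs : 0 ≤ s) :
    HasDerivAt (fun x => -(log (2 + x))⁻¹) ((2 + s) * log (2 + s) ^ 2)⁻¹ s := by
  have hlog : HasDerivAt (fun x => log (2 + x)) (2 + s)⁻¹ s := by
    simpa using ((hasDerivAt_id s).const_add 2).log (by positivity)
  rw [mul_inv, ← div_eq_mul_inv, ← neg_neg ((2 + s)⁻¹ / _), ← neg_div]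
  exact (hlog.inv (log_pos (by linarith)).ne').neg

lemma integral_logKernel_le {T : ℝ} (hT : 0 ≤ T) :
    ∫ s in (0:ℝ)..T, logKernel s ≤ 2 / log 2 := by
  have hcont : ContinuousOn (fun s => ((2 + s) * log (2 + s) ^ 2)⁻¹) (Icc 0 T) := by
    refine ContinuousOn.inv₀ ?_ fun s hs => ?_
    · exact (continuousOn_const.add continuousOn_id).mul
        (((continuousOn_const.add continuousOn_id).log fun s hs =>
          (by linarith [hs.1] : (2:ℝ) + s ≠ 0)).pow 2)
    · have := log_pos (by linarith [hs.1] : (1:ℝ) < 2 + s)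
      have : 0 < 2 + s := by linarith [hs.1]
      positivity
  have hbound : ∀ s ∈ Icc 0 T, logKernel s ≤ 2 * ((2 + s) * log (2 + s) ^ 2)⁻¹ := by
    intro s hs
    have := log_pos (by linarith [hs.1] : (1:ℝ) < 2 + s)
    have : 0 < 2 + s := by linarith [hs.1]
    rw [logKernel, abs_of_nonneg hs.1, ← div_eq_mul_inv, ← inv_div]
    gcongr
    rw [mul_div_right_comm]
    gcongr
    linarith [hs.1]
  have hFTC : ∫ s in (0:ℝ)..T, ((2 + s) * log (2 + s) ^ 2)⁻¹ = (log 2)⁻¹ - (log (2 + T))⁻¹ := by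
    rw [intervalIntegral.integral_eq_sub_of_hasDerivAt
      (fun s hs => hasDerivAt_neg_inv_log_two_add (uIcc_of_le hT ▸ hs).1)
      ((uIcc_of_le hT).symm ▸ hcont).intervalIntegrable]
    norm_num; ring
  calc ∫ s in (0:ℝ)..T, logKernel s
      ≤ ∫ s in (0:ℝ)..T, 2 * ((2 + s) * log (2 + s) ^ 2)⁻¹ :=
        intervalIntegral.integral_mono_on hT (continuous_logKernel.intervalIntegrable _ _)
          ((hcont.const_smul (2:ℝ)).intervalIntegrable_of_Icc hT) hbound
    _ = 2 * ((log 2)⁻¹ - (log (2 + T))⁻¹) := by rw [intervalIntegral.integral_const_mul, hFTC]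
    _ ≤ 2 / log 2 := by
        have := log_pos (by linarith : (1:ℝ) < 2 + T)
        rw [div_eq_mul_inv]
        gcongr
        linarith [inv_pos.2 this]

noncomputable def logWeight (a τ : ℝ) : ℝ := log (2 + τ) ^ 2 / (1 + τ) ^ a

lemma logWeight_nonneg (a : ℝ) {τ : ℝ} (hτ : 0 ≤ 1 + τ) : 0 ≤ logWeight a τ :=
  div_nonneg (sq_nonneg _) (rpow_nonneg hτ a)

lemma continuousOn_logWeight (a : ℝ) : ContinuousOn (logWeight a) (Ici 0) := by
  refine ContinuousOn.div ?_ ?_ fun τ hτ => (rpow_pos_of_pos (by linarith [mem_Ici.1 hτ]) a).ne'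
  · exact ((continuousOn_const.add continuousOn_id).log fun τ hτ =>
      (by linarith [mem_Ici.1 hτ] : (2:ℝ) + τ ≠ 0)).pow 2
  · exact (continuousOn_const.add continuousOn_id).rpow_const fun τ hτ =>
      Or.inl (by linarith [mem_Ici.1 hτ] : (1:ℝ) + τ ≠ 0)

lemma logWeight_le_of_half_le {a t τ : ℝ} (ha : 0 ≤ a) (hτ : t / 2 ≤ τ) (hτt : τ ≤ t) :
    logWeight a τ ≤ 2 ^ a * log (2 + t) ^ 2 / (1 + t) ^ a := by
  have ht : 0 ≤ t := by linarith
  have hnum : log (2 + τ) ^ 2 ≤ log (2 + t) ^ 2 := by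
    gcongr
    · exact log_nonneg (by linarith)
    · linarith
  have hden : (1 + t) ^ a ≤ 2 ^ a * (1 + τ) ^ a := by
    rw [← mul_rpow (by norm_num) (by linarith)]
    exact rpow_le_rpow (by linarith) (by linarith) ha
  have h2a : (0:ℝ) < 2 ^ a := rpow_pos_of_pos two_pos a
  calc logWeight a τ ≤ log (2 + t) ^ 2 / ((1 + t) ^ a / 2 ^ a) := by
        refine div_le_div₀ (sq_nonneg _) hnum
          (div_pos (rpow_pos_of_pos (by linarith) a) h2a) ?_
        rw [div_le_iff₀ h2a, mul_comm]
        exact hden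
    _ = 2 ^ a * log (2 + t) ^ 2 / (1 + t) ^ a := by
        rw [div_div_eq_mul_div, mul_comm]

lemma exists_integral_logWeight_le {a : ℝ} (ha : 1 < a) :
    ∃ M, ∀ T : ℝ, 0 ≤ T → ∫ τ in (0:ℝ)..T, logWeight a τ ≤ M := by
  obtain ⟨C, hC⟩ := exists_log_two_add_pow_le 2 (show 0 < (a - 1) / 2 by linarith)
  have hC0 : 0 ≤ C := by
    have h := hC 0 le_rfl
    rw [add_zero, add_zero, one_rpow, mul_one] at h
    exact (sq_nonneg _).trans h
  refine ⟨C * (1 / ((a + 1) / 2 - 1)), fun T hT => ?_⟩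
  have hbound : ∀ τ ∈ Icc 0 T, logWeight a τ ≤ C * (1 + τ) ^ (-((a + 1) / 2)) := by
    intro τ hτ
    have h1τ : 0 < 1 + τ := by linarith [hτ.1]
    rw [show -((a + 1) / 2) = (a - 1) / 2 - a by ring, rpow_sub h1τ, ← mul_div_assoc]
    exact div_le_div_of_nonneg_right (hC τ hτ.1) (rpow_nonneg h1τ.le a)
  calc ∫ τ in (0:ℝ)..T, logWeight a τ
      ≤ ∫ τ in (0:ℝ)..T, C * (1 + τ) ^ (-((a + 1) / 2)) := by
        refine intervalIntegral.integral_mono_on hT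
          (((continuousOn_logWeight a).mono Icc_subset_Ici_self).intervalIntegrable_of_Icc hT)
          ?_ hbound
        exact (continuousOn_const.mul ((continuousOn_const.add continuousOn_id).rpow_const
          fun τ hτ => Or.inl (by linarith [hτ.1] : (1:ℝ) + τ ≠ 0))).intervalIntegrable_of_Icc hT
    _ ≤ C * (1 / ((a + 1) / 2 - 1)) := by
        rw [intervalIntegral.integral_const_mul]
        exact mul_le_mul_of_nonneg_left (integral_one_add_rpow_neg_le (by linarith) hT) hC0

theorem exists_mul_integral_logKernel_mul_logWeight_le {a : ℝ} (ha : 1 < a) :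
    ∃ C, ∀ t : ℝ, 0 ≤ t →
      (1 + t) * log (2 + t) ^ 2 * ∫ τ in (0:ℝ)..t, logKernel (t - τ) * logWeight a τ ≤ C := by
  obtain ⟨M, hM⟩ := exists_integral_logWeight_le ha
  obtain ⟨C, hC⟩ := exists_log_two_add_pow_le 4 (sub_pos.2 ha)
  refine ⟨8 * M + 2 ^ a * C * (2 / log 2), fun t ht => ?_⟩
  have h1t : 0 < 1 + t := by linarith
  have hL : 0 < log (2 + t) := log_pos (by linarith)
  have hconv := integral_comp_sub_mul_le ht continuous_logKernel
    ((continuousOn_logWeight a).mono Icc_subset_Ici_self) (fun s _ => (logKernel_pos s).le)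
    (fun τ hτ => logWeight_nonneg a (by linarith [hτ.1]))
    (fun s hs => logKernel_le_of_half_le ht hs.1)
    (fun τ hτ => logWeight_le_of_half_le (by linarith) hτ.1 hτ.2)
    (integral_logKernel_le (by linarith)) (hM _ (by linarith))
  have hkernel : (1 + t) * log (2 + t) ^ 2 * logKernel t = 1 := by
    rw [logKernel, abs_of_nonneg ht, mul_inv_cancel₀ (by positivity)]
  have hgrowth : (1 + t) * log (2 + t) ^ 2 * (2 ^ a * log (2 + t) ^ 2 / (1 + t) ^ a)
      ≤ 2 ^ a * C := calc
    _ = 2 ^ a * (log (2 + t) ^ 4 / ((1 + t) ^ a / (1 + t))) := by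
        field_simp
    _ = 2 ^ a * (log (2 + t) ^ 4 / (1 + t) ^ (a - 1)) := by rw [rpow_sub_one h1t.ne']
    _ ≤ 2 ^ a * C := by
        gcongr
        rw [div_le_iff₀ (rpow_pos_of_pos h1t _)]
        exact hC t ht
  calc (1 + t) * log (2 + t) ^ 2 * ∫ τ in (0:ℝ)..t, logKernel (t - τ) * logWeight a τ
      ≤ (1 + t) * log (2 + t) ^ 2 *
          (8 * logKernel t * M + 2 ^ a * log (2 + t) ^ 2 / (1 + t) ^ a * (2 / log 2)) :=
        mul_le_mul_of_nonneg_left hconv (by positivity)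
    _ = 8 * M * ((1 + t) * log (2 + t) ^ 2 * logKernel t) +
          (1 + t) * log (2 + t) ^ 2 * (2 ^ a * log (2 + t) ^ 2 / (1 + t) ^ a) * (2 / log 2) := by
        ring
    _ ≤ 8 * M + 2 ^ a * C * (2 / log 2) := by
        rw [hkernel, mul_one]
        gcongr

/-- Convolution estimate for the term `G`: for `p > 3`, convolving the kernel
`1/((1+t)log²(2+t))` with `log²(2+τ)(1+τ)^{-(3-6/p)}` preserves the kernel's decay. -/
theorem stmt_10 (p : ℝ) (hp : 3 < p) :
    ∃ C : ℝ, ∀ t : ℝ, 0 < t →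
      (1 + t) * (Real.log (2 + t))^2 *
        ∫ τ in (0:ℝ)..t,
          (Real.log (2 + τ))^2 /
            ((1 + |t - τ|) * (Real.log (2 + |t - τ|))^2 * (1 + τ) ^ (3 - 6/p)) ≤ C := by
  have ha : 1 < 3 - 6 / p := by
    have : 6 / p < 2 := by rw [div_lt_iff₀ (by linarith)]; linarith
    linarith
  obtain ⟨C, hC⟩ := exists_mul_integral_logKernel_mul_logWeight_le ha
  refine ⟨C, fun t ht => le_of_eq_of_le ?_ (hC t ht.le)⟩
  congr 1
  refine intervalIntegral.integral_congr fun τ _ => ?_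
  rw [logKernel, logWeight, div_mul_eq_div_div_swap, div_eq_inv_mul]
end
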